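/- arXiv:1606.01661 — 3 statements merged into one kernel-verified Lean document; each statement's English description precedes it below -/
import Mathlib

section
/- The Weierstrass transform of the n-th Hermite polynomial scaled by one-half is the n-th power function: (1/√(4π)) ∫_{-∞}^∞ e^{-(x-y)²/4} H_n(y/2) dy = x^n for every real x and natural number n. -/
open Real Filter MeasureTheory

/-- Physicists' Hermite polynomials via the standard recurrence
`H₀ = 1`, `H₁(x) = 2x`, `H_{n+2}(x) = 2x H_{n+1}(x) - 2(n+1) H_n(x)`. -/
noncomputable def physHermite : ℕ → ℝ → ℝ
  | 0, _ => 1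
  | 1, x => 2 * x
  | n+2, x => 2 * x * physHermite (n+1) x - 2 * ((n : ℝ) + 1) * physHermite n x

/-! Write `G_a(y) = e^{-(y-a)²}`. The derivative of `P · G_a` is `(P' - 2(y - a)P) · G_a`, which
integrates to zero, so the raising operator `2y - d/dy`, which takes `H_n` to `H_{n+1}`, multiplies
integrals against `G_a` by `2a`. Starting from `∫ G_a = √π` this gives `∫ H_n G_a = √π (2a)ⁿ`,
and the substitution `y = 2u` turns the Weierstrass transform into this integral with `a = x/2`. -/

open Polynomial

noncomputable def physHermitePoly : ℕ → ℝ[X]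
  | 0 => 1
  | 1 => 2 * X
  | n + 2 => 2 * X * physHermitePoly (n + 1) - 2 * ((n : ℝ[X]) + 1) * physHermitePoly n

theorem eval_physHermitePoly : ∀ (n : ℕ) (x : ℝ), (physHermitePoly n).eval x = physHermite n x
  | 0, x => by simp [physHermitePoly, physHermite]
  | 1, x => by simp [physHermitePoly, physHermite]
  | n + 2, x => by
    simp [physHermitePoly, physHermite, eval_physHermitePoly (n + 1) x, eval_physHermitePoly n x]

theorem derivative_physHermitePoly_succ : ∀ n : ℕ,
    derivative (physHermitePoly (n + 1)) = 2 * ((n : ℝ[X]) + 1) * physHermitePoly n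
  | 0 => by simp [physHermitePoly]
  | n + 1 => by
    rw [physHermitePoly]
    simp only [derivative_sub, derivative_mul, derivative_X, derivative_ofNat, derivative_natCast,
      derivative_add, derivative_one, derivative_physHermitePoly_succ n]
    cases n with
    | zero =>
      simp only [physHermitePoly, derivative_one, Nat.cast_zero]
      ring
    | succ n =>
      rw [derivative_physHermitePoly_succ n, physHermitePoly]
      push_cast
      ring

theorem physHermitePoly_succ (n : ℕ) :
    physHermitePoly (n + 1) = 2 * X * physHermitePoly n - derivative (physHermitePoly n) := by
  cases n with
  | zero => simp [physHermitePoly]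
  | succ n => rw [derivative_physHermitePoly_succ, physHermitePoly]

theorem integrable_eval_mul_exp_neg_sq (P : ℝ[X]) :
    Integrable fun y ↦ P.eval y * exp (-y ^ 2) := by
  induction P using Polynomial.induction_on' with
  | add p q hp hq => simpa only [eval_add, add_mul] using hp.fun_add hq
  | monomial k c =>
    have h := integrable_rpow_mul_exp_neg_mul_sq one_pos
      (neg_one_lt_zero.trans_le (Nat.cast_nonneg k))
    simpa only [eval_monomial, rpow_natCast, neg_mul, one_mul, mul_assoc] using h.const_mul c

theorem integrable_eval_mul_exp_neg_sub_sq (P : ℝ[X]) (a : ℝ) :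
    Integrable fun y ↦ P.eval y * exp (-(y - a) ^ 2) := by
  have h := (integrable_eval_mul_exp_neg_sq (P.comp (X + C a))).comp_sub_right a
  simp only [eval_comp, eval_add, eval_X, eval_C, sub_add_cancel] at h
  exact h

theorem integral_eval_two_mul_X_sub_derivative_mul_exp (P : ℝ[X]) (a : ℝ) :
    ∫ y, (2 * X * P - derivative P).eval y * exp (-(y - a) ^ 2) =
      2 * a * ∫ y, P.eval y * exp (-(y - a) ^ 2) := by
  set Q := derivative P - 2 * (X - C a) * P
  have hderiv (y : ℝ) : HasDerivAt (fun y ↦ P.eval y * exp (-(y - a) ^ 2))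
      (Q.eval y * exp (-(y - a) ^ 2)) y := by
    have hexponent : HasDerivAt (fun y ↦ -(y - a) ^ 2) (-(2 * (y - a))) y := by
      simpa using (((hasDerivAt_id' y).sub_const a).fun_pow 2).fun_neg
    refine ((P.hasDerivAt y).mul hexponent.exp).congr_deriv ?_
    simp only [Q, eval_sub, eval_mul, eval_ofNat, eval_X, eval_C]
    ring
  have hzero : ∫ y, Q.eval y * exp (-(y - a) ^ 2) = 0 :=
    integral_eq_zero_of_hasDerivAt_of_integrable hderiv
      (integrable_eval_mul_exp_neg_sub_sq Q a) (integrable_eval_mul_exp_neg_sub_sq P a)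
  calc ∫ y, (2 * X * P - derivative P).eval y * exp (-(y - a) ^ 2)
      = ∫ y, 2 * a * (P.eval y * exp (-(y - a) ^ 2)) - Q.eval y * exp (-(y - a) ^ 2) := by
        congr 1 with y
        simp only [Q, eval_sub, eval_mul, eval_ofNat, eval_X, eval_C]
        ring
    _ = 2 * a * ∫ y, P.eval y * exp (-(y - a) ^ 2) := by
        rw [integral_sub ((integrable_eval_mul_exp_neg_sub_sq P a).const_mul _)
          (integrable_eval_mul_exp_neg_sub_sq Q a), integral_const_mul, hzero, sub_zero]

theorem integral_physHermitePoly_mul_exp_neg_sub_sq (n : ℕ) (a : ℝ) :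
    ∫ y, (physHermitePoly n).eval y * exp (-(y - a) ^ 2) = √π * (2 * a) ^ n := by
  induction n with
  | zero =>
    simpa [physHermitePoly] using
      (integral_sub_right_eq_self (fun y ↦ exp (-1 * y ^ 2)) a).trans (integral_gaussian 1)
  | succ n ih =>
    rw [physHermitePoly_succ, integral_eval_two_mul_X_sub_derivative_mul_exp, ih]
    ring

theorem weierstrass_transform_hermite (n : ℕ) (x : ℝ) :
    (Real.sqrt (4*π))⁻¹ * ∫ y : ℝ, Real.exp (-(x-y)^2/4) * physHermite n (y/2) = x ^ n := by
  have hscale : ∫ y, exp (-(x - y) ^ 2 / 4) * physHermite n (y / 2) =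
      2 * ∫ u, (physHermitePoly n).eval u * exp (-(u - x / 2) ^ 2) := by
    calc ∫ y, exp (-(x - y) ^ 2 / 4) * physHermite n (y / 2)
        = 2 * ∫ u, exp (-(x - 2 * u) ^ 2 / 4) * physHermite n (2 * u / 2) := by
          rw [Measure.integral_comp_mul_left (fun y ↦ exp (-(x - y) ^ 2 / 4) * physHermite n (y / 2))]
          rw [abs_of_pos (by norm_num), smul_eq_mul, mul_inv_cancel_left₀ two_ne_zero]
      _ = 2 * ∫ u, (physHermitePoly n).eval u * exp (-(u - x / 2) ^ 2) := by
          congr 2 with u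
          rw [eval_physHermitePoly, mul_div_cancel_left₀ u two_ne_zero, mul_comm]
          congr 2
          ring
  have hsqrt : √(4 * π) = 2 * √π := by
    rw [show (4 : ℝ) * π = 2 ^ 2 * π by ring, sqrt_mul (by positivity), sqrt_sq zero_le_two]
  rw [hscale, integral_physHermitePoly_mul_exp_neg_sub_sq, hsqrt]
  field_simp
end

section
/- For every natural number n, (1/√(2π)) ∫_{-∞}^∞ e^{-(p-A)²/2} (1/√2)^n H_n(p/√2) dp = A^n for all real A, where H_n is the physicists' Hermite polynomial. -/
/-!
Mathlib's `hermite n` is the probabilists' Hermite polynomial `He_n`, and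
`H_n(x) = 2^{n/2} He_n(√2 x)`, so the integrand is `exp (-(p - A)^2 / 2) * He_n(p)`.
Since `He_{n+1} = X He_n - He_n'`, Gaussian integration by parts (Stein's identity
`∫ g (x - A) P = ∫ g P'` for `g x = exp (-(x - A)^2 / 2)`) gives
`∫ g He_{n+1} = A ∫ g He_n`, and `∫ g = √(2π)`.
-/

open Real Filter MeasureTheory

open Polynomial

namespace Polynomial

theorem derivative_hermite_succ (n : ℕ) :
    derivative (hermite (n + 1)) = (n + 1 : ℤ[X]) * hermite n := by
  induction n with
  | zero => simp
  | succ n ih =>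
    rw [hermite_succ (n + 1), derivative_sub, derivative_mul, ih, derivative_mul, hermite_succ n]
    simp only [derivative_X, one_mul, derivative_add, derivative_natCast, derivative_one, add_zero,
      zero_mul, zero_add]
    push_cast
    ring

theorem hermite_succ_succ (n : ℕ) :
    hermite (n + 2) = X * hermite (n + 1) - (n + 1 : ℤ[X]) * hermite n := by
  rw [hermite_succ (n + 1), derivative_hermite_succ]

end Polynomial

theorem physHermite_eq_aeval_hermite : ∀ (n : ℕ) (x : ℝ),
    physHermite n x = √2 ^ n * aeval (√2 * x) (hermite n)
  | 0, x => by simp [physHermite]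
  | 1, x => by
    simp only [physHermite, hermite_one, aeval_X, pow_one]
    rw [← mul_assoc, Real.mul_self_sqrt zero_le_two]
  | n + 2, x => by
    have hs : √2 ^ 2 = 2 := Real.sq_sqrt zero_le_two
    rw [physHermite, physHermite_eq_aeval_hermite (n + 1), physHermite_eq_aeval_hermite n,
      hermite_succ_succ]
    simp only [map_sub, map_mul, aeval_X, map_add, map_natCast, map_one]
    linear_combination (√2 ^ n * (n + 1) * aeval (√2 * x) (hermite n)
      - √2 ^ (n + 1) * x * aeval (√2 * x) (hermite (n + 1))) * hs

theorem integrable_pow_mul_exp_neg_mul_sq {b : ℝ} (hb : 0 < b) (k : ℕ) :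
    Integrable fun x : ℝ => x ^ k * exp (-b * x ^ 2) := by
  simpa [rpow_natCast] using
    integrable_rpow_mul_exp_neg_mul_sq hb (s := k) (by linarith [k.cast_nonneg (α := ℝ)])

theorem integrable_exp_neg_mul_sq_mul_eval {b : ℝ} (hb : 0 < b) (P : ℝ[X]) :
    Integrable fun x : ℝ => exp (-b * x ^ 2) * P.eval x := by
  induction P using Polynomial.induction_on' with
  | add P Q hP hQ => simpa only [eval_add, mul_add] using hP.fun_add hQ
  | monomial k a =>
    simpa only [eval_monomial, mul_comm, mul_left_comm, mul_assoc] using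
      (integrable_pow_mul_exp_neg_mul_sq hb k).const_mul a

theorem integrable_exp_neg_sq_sub_mul_eval (A : ℝ) (P : ℝ[X]) :
    Integrable fun x : ℝ => exp (-(x - A) ^ 2 / 2) * P.eval x := by
  have := (integrable_exp_neg_mul_sq_mul_eval one_half_pos (P.comp (X + C A))).comp_sub_right A
  refine this.congr (ae_of_all _ fun x => ?_)
  simp only [eval_comp, eval_add, eval_X, eval_C, sub_add_cancel]
  ring_nf

theorem integral_exp_neg_sq_sub (A : ℝ) :
    ∫ x : ℝ, exp (-(x - A) ^ 2 / 2) = √(2 * π) :=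
  calc ∫ x : ℝ, exp (-(x - A) ^ 2 / 2) = ∫ x : ℝ, exp (-(1 / 2) * (x - A) ^ 2) := by
        congr with x; ring_nf
    _ = ∫ x : ℝ, exp (-(1 / 2) * x ^ 2) :=
        integral_sub_right_eq_self (fun x => exp (-(1 / 2) * x ^ 2)) A
    _ = √(2 * π) := by rw [integral_gaussian]; ring_nf

theorem hasDerivAt_exp_neg_sq_sub (A x : ℝ) :
    HasDerivAt (fun x : ℝ => exp (-(x - A) ^ 2 / 2)) (-(x - A) * exp (-(x - A) ^ 2 / 2)) x := by
  have h : HasDerivAt (fun x : ℝ => -(x - A) ^ 2 / 2) (-(x - A)) x := by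
    refine (((hasDerivAt_id' x).sub_const A).fun_pow 2).fun_neg.div_const 2 |>.congr_deriv ?_
    norm_num
    ring
  simpa only [mul_comm] using h.exp

theorem integral_exp_neg_sq_sub_mul_sub_mul_eval (A : ℝ) (P : ℝ[X]) :
    ∫ x : ℝ, exp (-(x - A) ^ 2 / 2) * ((x - A) * P.eval x)
      = ∫ x : ℝ, exp (-(x - A) ^ 2 / 2) * (derivative P).eval x := by
  have hgauss (Q : ℝ[X]) {f : ℝ → ℝ} (hf : ∀ x, exp (-(x - A) ^ 2 / 2) * Q.eval x = f x) :
      Integrable f :=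
    (integrable_exp_neg_sq_sub_mul_eval A Q).congr (ae_of_all _ hf)
  have hparts := integral_mul_deriv_eq_deriv_mul_of_integrable
    (fun x _ => P.hasDerivAt x) (fun x _ => hasDerivAt_exp_neg_sq_sub A x)
    (hgauss (-(X - C A) * P) fun x => by
      simp only [Pi.mul_apply, eval_mul, eval_neg, eval_sub, eval_C, eval_X]; ring)
    (hgauss (derivative P) fun x => mul_comm _ _) (hgauss P fun x => mul_comm _ _)
  calc ∫ x : ℝ, exp (-(x - A) ^ 2 / 2) * ((x - A) * P.eval x)
      = -∫ x : ℝ, P.eval x * (-(x - A) * exp (-(x - A) ^ 2 / 2)) := by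
        rw [← integral_neg]; congr with x; ring
    _ = ∫ x : ℝ, exp (-(x - A) ^ 2 / 2) * (derivative P).eval x := by
        rw [hparts, neg_neg]; congr with x; ring

theorem integral_exp_neg_sq_sub_mul_eval_X_mul_sub_derivative (A : ℝ) (P : ℝ[X]) :
    ∫ x : ℝ, exp (-(x - A) ^ 2 / 2) * (X * P - derivative P).eval x
      = A * ∫ x : ℝ, exp (-(x - A) ^ 2 / 2) * P.eval x := by
  have hgauss (Q : ℝ[X]) := integrable_exp_neg_sq_sub_mul_eval A Q
  have hlin : Integrable fun x : ℝ => exp (-(x - A) ^ 2 / 2) * ((x - A) * P.eval x) := by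
    refine (hgauss ((X - C A) * P)).congr (ae_of_all _ fun x => ?_)
    simp
  calc ∫ x : ℝ, exp (-(x - A) ^ 2 / 2) * (X * P - derivative P).eval x
      = ∫ x : ℝ, (A * (exp (-(x - A) ^ 2 / 2) * P.eval x)
          + (exp (-(x - A) ^ 2 / 2) * ((x - A) * P.eval x)
            - exp (-(x - A) ^ 2 / 2) * (derivative P).eval x)) := by
        congr with x; simp only [eval_sub, eval_mul, eval_X]; ring
    _ = A * ∫ x : ℝ, exp (-(x - A) ^ 2 / 2) * P.eval x := by
        rw [integral_add ((hgauss P).const_mul A) (hlin.sub' (hgauss _)),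
          integral_sub hlin (hgauss _), integral_exp_neg_sq_sub_mul_sub_mul_eval, sub_self, add_zero, integral_const_mul]

theorem integral_exp_neg_sq_sub_mul_aeval_hermite (A : ℝ) (n : ℕ) :
    ∫ x : ℝ, exp (-(x - A) ^ 2 / 2) * aeval x (hermite n) = A ^ n * √(2 * π) := by
  induction n with
  | zero => simp [integral_exp_neg_sq_sub]
  | succ n ih =>
    simp only [← eval_map_algebraMap] at ih ⊢
    rw [hermite_succ, Polynomial.map_sub, Polynomial.map_mul, map_X, ← derivative_map,
      integral_exp_neg_sq_sub_mul_eval_X_mul_sub_derivative, ih, pow_succ]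
    ring

theorem weierstrass_transform_hermite_scaled (n : ℕ) (A : ℝ) :
    (Real.sqrt (2*π))⁻¹ *
      ∫ p : ℝ, Real.exp (-(p-A)^2/2) * ((1 / Real.sqrt 2) ^ n * physHermite n (p / Real.sqrt 2))
      = A ^ n := by
  have hs : √2 ≠ 0 := by positivity
  have hscaled (p : ℝ) : (1 / √2) ^ n * physHermite n (p / √2) = aeval p (hermite n) := by
    rw [physHermite_eq_aeval_hermite, ← mul_assoc, ← mul_pow, mul_div_cancel₀ p hs, one_div,
      inv_mul_cancel₀ hs, one_pow, one_mul]
  simp only [hscaled, integral_exp_neg_sq_sub_mul_aeval_hermite]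
  field_simp
end

section
/- There is no measurable function g : ℝ → ℝ and real number p₀ with constants L > 0 and c < 0 such that g(p) ≤ L e^{p²/4} for p ≤ p₀, g(p) ≤ c for p > p₀, and (1/√(2π)) ∫_{-∞}^∞ e^{-(p-A)²/2} g(p) dp > 0 for all real A. (Equivalently: with such an upper envelope, the Gaussian average becomes negative for sufficiently large A.) -/
/-!
Weight `g` by the Gaussian `exp (-(p - A) ^ 2 / 2)` centred at `A`. On `p ≤ p₀` the weighted
envelope `L e^{p²/4}` is, for `A ≥ p₀`, dominated by its value at `A = p₀`, which is again a
Gaussian (the weight decays like `e^{-p²/2}`, faster than the envelope grows), and it tends to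
`0` pointwise as `A → ∞`; so its integral tends to `0` by dominated convergence. Meanwhile the
mass of the weight on `p > p₀` tends to its full mass `√(2π)`. Hence the weighted integral of
`g` is eventually bounded by a quantity tending to `c √(2π) < 0`.
-/

open Real Filter MeasureTheory Set Topology

lemma exp_neg_sq_sub_div_two_eq (p a : ℝ) :
    exp (-(p - a) ^ 2 / 2) = exp (-(1 / 2) * (p - a) ^ 2) := by
  ring_nf

lemma integrable_exp_neg_sq_sub_div_two (a : ℝ) :
    Integrable (fun p : ℝ => exp (-(p - a) ^ 2 / 2)) := by
  simpa only [exp_neg_sq_sub_div_two_eq] using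
    (integrable_exp_neg_mul_sq (b := 1 / 2) (by norm_num)).comp_sub_right a

lemma integral_exp_neg_sq_sub_div_two (a : ℝ) :
    ∫ p : ℝ, exp (-(p - a) ^ 2 / 2) = √(2 * π) := by
  simp only [exp_neg_sq_sub_div_two_eq]
  rw [integral_sub_right_eq_self (fun p : ℝ => exp (-(1 / 2) * p ^ 2)) a, integral_gaussian]
  congr 1
  field_simp

lemma exp_neg_sq_sub_div_two_le {p a A : ℝ} (hp : p ≤ a) (ha : a ≤ A) :
    exp (-(p - A) ^ 2 / 2) ≤ exp (-(p - a) ^ 2 / 2) :=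
  exp_le_exp.mpr (by nlinarith)

lemma tendsto_exp_neg_sq_sub_div_two_atTop (p : ℝ) :
    Tendsto (fun A : ℝ => exp (-(p - A) ^ 2 / 2)) atTop (𝓝 0) := by
  have h : Tendsto (fun A : ℝ => (A - p) ^ 2 / 2) atTop atTop :=
    ((tendsto_pow_atTop two_ne_zero).comp
      (tendsto_atTop_add_const_right _ (-p) tendsto_id)).atTop_div_const two_pos
  refine tendsto_exp_atBot.comp (tendsto_neg_atTop_atBot.comp h |>.congr fun A => ?_)
  simp only [Function.comp_apply]
  ring

section LeftTail

variable {h : ℝ → ℝ} {p₀ : ℝ}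

lemma norm_exp_neg_sq_sub_div_two_mul_le {p A : ℝ} (hp : p ≤ p₀) (hA : p₀ ≤ A) :
    ‖exp (-(p - A) ^ 2 / 2) * h p‖ ≤ ‖exp (-(p - p₀) ^ 2 / 2) * h p‖ := by
  simp only [norm_mul, Real.norm_of_nonneg (exp_pos _).le]
  exact mul_le_mul_of_nonneg_right (exp_neg_sq_sub_div_two_le hp hA) (norm_nonneg _)

lemma IntegrableOn.exp_neg_sq_sub_div_two_mul_of_le {A : ℝ}
    (hh : AEStronglyMeasurable h (volume.restrict (Iic p₀)))
    (hhi : IntegrableOn (fun p => exp (-(p - p₀) ^ 2 / 2) * h p) (Iic p₀)) (hA : p₀ ≤ A) :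
    IntegrableOn (fun p => exp (-(p - A) ^ 2 / 2) * h p) (Iic p₀) :=
  Integrable.mono hhi (by fun_prop) <| (ae_restrict_mem measurableSet_Iic).mono fun _ hp =>
    norm_exp_neg_sq_sub_div_two_mul_le hp hA

lemma tendsto_setIntegral_Iic_exp_neg_sq_sub_div_two_mul
    (hh : AEStronglyMeasurable h (volume.restrict (Iic p₀)))
    (hhi : IntegrableOn (fun p => exp (-(p - p₀) ^ 2 / 2) * h p) (Iic p₀)) :
    Tendsto (fun A => ∫ p in Iic p₀, exp (-(p - A) ^ 2 / 2) * h p) atTop (𝓝 0) := by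
  have := tendsto_integral_filter_of_dominated_convergence (μ := volume.restrict (Iic p₀))
    (fun p => ‖exp (-(p - p₀) ^ 2 / 2) * h p‖) (.of_forall fun _ => by fun_prop)
    ((eventually_ge_atTop p₀).mono fun _ hA => (ae_restrict_mem measurableSet_Iic).mono
      fun _ hp => norm_exp_neg_sq_sub_div_two_mul_le hp hA)
    hhi.norm (.of_forall fun p => by
      simpa using (tendsto_exp_neg_sq_sub_div_two_atTop p).mul_const (h p))
  simpa using this

end LeftTail

lemma tendsto_setIntegral_Ioi_exp_neg_sq_sub_div_two (p₀ : ℝ) :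
    Tendsto (fun A => ∫ p in Ioi p₀, exp (-(p - A) ^ 2 / 2)) atTop (𝓝 √(2 * π)) := by
  have hleft := tendsto_setIntegral_Iic_exp_neg_sq_sub_div_two_mul (h := fun _ => 1) (p₀ := p₀)
    aestronglyMeasurable_const
    (by simpa using (integrable_exp_neg_sq_sub_div_two p₀).integrableOn)
  have hsplit : ∀ A, ∫ p in Ioi p₀, exp (-(p - A) ^ 2 / 2)
      = √(2 * π) - ∫ p in Iic p₀, exp (-(p - A) ^ 2 / 2) * 1 := fun A => by
    rw [← integral_exp_neg_sq_sub_div_two A, ← intervalIntegral.integral_Iic_add_Ioi (b := p₀)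
      (integrable_exp_neg_sq_sub_div_two A).integrableOn
      (integrable_exp_neg_sq_sub_div_two A).integrableOn]
    simp
  simpa [hsplit] using hleft.const_sub √(2 * π)

lemma integral_exp_neg_sq_sub_div_two_mul_le {g h : ℝ → ℝ} {p₀ c A : ℝ}
    (hh : AEStronglyMeasurable h (volume.restrict (Iic p₀)))
    (hhi : IntegrableOn (fun p => exp (-(p - p₀) ^ 2 / 2) * h p) (Iic p₀))
    (hgh : ∀ p ≤ p₀, g p ≤ h p) (hgc : ∀ p, p₀ < p → g p ≤ c) (hA : p₀ ≤ A)
    (hg : Integrable (fun p => exp (-(p - A) ^ 2 / 2) * g p)) :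
    ∫ p, exp (-(p - A) ^ 2 / 2) * g p
      ≤ (∫ p in Iic p₀, exp (-(p - A) ^ 2 / 2) * h p)
        + c * ∫ p in Ioi p₀, exp (-(p - A) ^ 2 / 2) := by
  rw [← intervalIntegral.integral_Iic_add_Ioi hg.integrableOn hg.integrableOn,
    ← integral_const_mul]
  refine add_le_add ?_ ?_
  · exact setIntegral_mono_on hg.integrableOn
      (IntegrableOn.exp_neg_sq_sub_div_two_mul_of_le hh hhi hA) measurableSet_Iic
      fun p hp => mul_le_mul_of_nonneg_left (hgh p hp) (exp_pos _).le
  · refine setIntegral_mono_on hg.integrableOn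
      ((integrable_exp_neg_sq_sub_div_two A).const_mul c).integrableOn measurableSet_Ioi
      fun p hp => ?_
    rw [mul_comm c]
    exact mul_le_mul_of_nonneg_left (hgc p hp) (exp_pos _).le

lemma eventually_integral_exp_neg_sq_sub_div_two_mul_nonpos {g h : ℝ → ℝ} {p₀ c : ℝ}
    (hh : AEStronglyMeasurable h (volume.restrict (Iic p₀)))
    (hhi : IntegrableOn (fun p => exp (-(p - p₀) ^ 2 / 2) * h p) (Iic p₀))
    (hgh : ∀ p ≤ p₀, g p ≤ h p) (hc : c < 0) (hgc : ∀ p, p₀ < p → g p ≤ c) :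
    ∀ᶠ A in atTop, ∫ p, exp (-(p - A) ^ 2 / 2) * g p ≤ 0 := by
  have hbound := (tendsto_setIntegral_Iic_exp_neg_sq_sub_div_two_mul hh hhi).add
    ((tendsto_setIntegral_Ioi_exp_neg_sq_sub_div_two p₀).const_mul c)
  rw [zero_add] at hbound
  have hlim : c * √(2 * π) < 0 := mul_neg_of_neg_of_pos hc (by positivity)
  filter_upwards [hbound.eventually (gt_mem_nhds hlim), eventually_ge_atTop p₀] with A hA hp₀A
  by_cases hg : Integrable (fun p => exp (-(p - A) ^ 2 / 2) * g p)
  · exact (integral_exp_neg_sq_sub_div_two_mul_le hh hhi hgh hgc hp₀A hg).trans hA.le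
  · -- the integral of a non-integrable function is `0` by convention
    exact (integral_undef hg).le

lemma exp_neg_sq_sub_div_two_mul_exp_sq_div_four (p a : ℝ) :
    exp (-(p - a) ^ 2 / 2) * exp (p ^ 2 / 4)
      = exp (a ^ 2 / 2) * exp (-(1 / 4) * (p - 2 * a) ^ 2) := by
  rw [← exp_add, ← exp_add]
  ring_nf

lemma integrable_exp_neg_sq_sub_div_two_mul_exp_sq_div_four (a : ℝ) :
    Integrable (fun p : ℝ => exp (-(p - a) ^ 2 / 2) * exp (p ^ 2 / 4)) := by
  simpa only [exp_neg_sq_sub_div_two_mul_exp_sq_div_four] using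
    ((integrable_exp_neg_mul_sq (b := 1 / 4) (by norm_num)).comp_sub_right (2 * a)).const_mul _

theorem no_negative_envelope_with_positive_pressure :
    ¬ ∃ (g : ℝ → ℝ) (p₀ L c : ℝ), Measurable g ∧ 0 < L ∧ c < 0 ∧
      (∀ p : ℝ, p ≤ p₀ → g p ≤ L * Real.exp (p^2/4)) ∧
      (∀ p : ℝ, p₀ < p → g p ≤ c) ∧
      (∀ A : ℝ, 0 < (Real.sqrt (2*π))⁻¹ * ∫ p : ℝ, Real.exp (-(p-A)^2/2) * g p) := by
  rintro ⟨g, p₀, L, c, -, -, hc, hleft, hright, hpos⟩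
  have henvelope :
      IntegrableOn (fun p => exp (-(p - p₀) ^ 2 / 2) * (L * exp (p ^ 2 / 4))) (Iic p₀) := by
    simpa only [mul_left_comm] using
      ((integrable_exp_neg_sq_sub_div_two_mul_exp_sq_div_four p₀).const_mul L).integrableOn
  obtain ⟨A, hA⟩ := (eventually_integral_exp_neg_sq_sub_div_two_mul_nonpos
    (by fun_prop) henvelope hleft hc hright).exists
  exact (hpos A).not_ge (mul_nonpos_of_nonneg_of_nonpos (by positivity) hA)
end
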